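/- arXiv:2303.04560 — 5 statements merged into one kernel-verified Lean document; each statement's English description precedes it below -/
import Mathlib

section
/- Let f : ℝ^d → ℝ be differentiable and μ-strongly convex (μ > 0) with minimizer x*. Fix x ∈ ℝ^d and γ > 0, and let ĝ, ḡ be square-integrable ℝ^d-valued random vectors on a probability space with E[ḡ] = ∇f(x). Then for x⁺ = x − γ·ĝ one has E[‖x⁺ − x*‖²] ≤ (1 + γμ/2)‖x − x*‖² − 2γ⟨x − x*, ∇f(x)⟩ + 2γ²·E[‖ḡ‖²] + 2γ(1/μ + γ)·E[‖ĝ − ḡ‖²], and, using strong convexity, E[‖x⁺ − x*‖²] ≤ (1 − γμ/2)‖x − x*‖² − 2γ(f(x) − f(x*)) + 2γ²·E[‖ḡ‖²] + 2γ(1/μ + γ)·E[‖ĝ − ḡ‖²]. -/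
/-!
Write `e = x - x*` and split the step as `ĝ = ḡ + (ĝ - ḡ)`. Expanding `‖e - γ ĝ‖²`, the bias enters
through the cross term `-2γ⟪e, ĝ - ḡ⟫`, which Young's inequality bounds by
`(γμ/2)‖e‖² + (2γ/μ)‖ĝ - ḡ‖²`, and through `γ²‖ĝ‖² ≤ 2γ²‖ḡ‖² + 2γ²‖ĝ - ḡ‖²`. Taking expectations
turns `⟪e, ḡ⟫` into `⟪e, ∇f(x)⟫`, which gives the first inequality. Strong convexity between `x`
and `x*` gives `⟪x - x*, ∇f(x)⟫ ≥ f(x) - f(x*) + (μ/2)‖x - x*‖²`, which gives the second.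
-/

open MeasureTheory
open scoped InnerProductSpace

lemma norm_sq_le_two_mul_norm_sq_add_two_mul_norm_sub_sq {E : Type*} [SeminormedAddCommGroup E]
    (h b : E) : ‖h‖ ^ 2 ≤ 2 * ‖b‖ ^ 2 + 2 * ‖h - b‖ ^ 2 := by
  have htri : ‖h‖ ≤ ‖b‖ + ‖h - b‖ := by simpa using norm_add_le b (h - b)
  nlinarith [add_sq_le (a := ‖b‖) (b := ‖h - b‖), norm_nonneg h]

section InnerProductSpace

variable {E : Type*} [NormedAddCommGroup E] [InnerProductSpace ℝ E]

lemma neg_two_mul_inner_le {μ : ℝ} (hμ : 0 < μ) (e v : E) :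
    -(2 * ⟪e, v⟫_ℝ) ≤ μ / 2 * ‖e‖ ^ 2 + 2 / μ * ‖v‖ ^ 2 := by
  have hcs : -⟪e, v⟫_ℝ ≤ ‖e‖ * ‖v‖ := (neg_le_abs _).trans (abs_real_inner_le_norm e v)
  have hyoung : μ / 2 * ‖e‖ ^ 2 + 2 / μ * ‖v‖ ^ 2 - 2 * (‖e‖ * ‖v‖)
      = 2 / μ * (μ / 2 * ‖e‖ - ‖v‖) ^ 2 := by
    field_simp
    ring
  have hnonneg : 0 ≤ 2 / μ * (μ / 2 * ‖e‖ - ‖v‖) ^ 2 := by positivity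
  linarith

lemma norm_sub_smul_sq_le {γ μ : ℝ} (hγ : 0 < γ) (hμ : 0 < μ) (e h b : E) :
    ‖e - γ • h‖ ^ 2 ≤ (1 + γ * μ / 2) * ‖e‖ ^ 2 - 2 * γ * ⟪e, b⟫_ℝ
      + 2 * γ ^ 2 * ‖b‖ ^ 2 + 2 * γ * (1 / μ + γ) * ‖h - b‖ ^ 2 := by
  have hexpand : ‖e - γ • h‖ ^ 2 = ‖e‖ ^ 2 - 2 * γ * ⟪e, h⟫_ℝ + γ ^ 2 * ‖h‖ ^ 2 := by
    rw [norm_sub_sq_real, real_inner_smul_right, norm_smul, Real.norm_eq_abs, mul_pow, sq_abs]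
    ring
  have hsplit : ⟪e, h⟫_ℝ = ⟪e, b⟫_ℝ + ⟪e, h - b⟫_ℝ := by
    rw [← inner_add_right, add_sub_cancel]
  have hcross := mul_le_mul_of_nonneg_left (neg_two_mul_inner_le hμ e (h - b)) hγ.le
  have hsq := mul_le_mul_of_nonneg_left
    (norm_sq_le_two_mul_norm_sq_add_two_mul_norm_sub_sq h b) (sq_nonneg γ)
  rw [hexpand, hsplit]
  linear_combination hcross + hsq

variable [CompleteSpace E] {Ω : Type*} {m0 : MeasurableSpace Ω} {P : Measure Ω}
  [IsProbabilityMeasure P]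

lemma integral_norm_sub_smul_sq_le {γ μ : ℝ} (hγ : 0 < γ) (hμ : 0 < μ) (e : E)
    {ghat gbar : Ω → E} (hghat : MemLp ghat 2 P) (hgbar : MemLp gbar 2 P) :
    ∫ ω, ‖e - γ • ghat ω‖ ^ 2 ∂P
      ≤ (1 + γ * μ / 2) * ‖e‖ ^ 2 - 2 * γ * ⟪e, ∫ ω, gbar ω ∂P⟫_ℝ
        + 2 * γ ^ 2 * ∫ ω, ‖gbar ω‖ ^ 2 ∂P
        + 2 * γ * (1 / μ + γ) * ∫ ω, ‖ghat ω - gbar ω‖ ^ 2 ∂P := by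
  have hgbar_int : Integrable gbar P := hgbar.integrable one_le_two
  have hgbar_sq : Integrable (fun ω => ‖gbar ω‖ ^ 2) P :=
    (memLp_two_iff_integrable_sq_norm hgbar.1).mp hgbar
  have hbias_sq : Integrable (fun ω => ‖ghat ω - gbar ω‖ ^ 2) P :=
    (memLp_two_iff_integrable_sq_norm (hghat.sub hgbar).1).mp (hghat.sub hgbar)
  have hinner : Integrable (fun ω => ⟪e, gbar ω⟫_ℝ) P := hgbar_int.const_inner e
  calc ∫ ω, ‖e - γ • ghat ω‖ ^ 2 ∂P
      ≤ ∫ ω, ((1 + γ * μ / 2) * ‖e‖ ^ 2 - 2 * γ * ⟪e, gbar ω⟫_ℝ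
        + 2 * γ ^ 2 * ‖gbar ω‖ ^ 2 + 2 * γ * (1 / μ + γ) * ‖ghat ω - gbar ω‖ ^ 2) ∂P :=
        integral_mono_of_nonneg (.of_forall fun _ => by positivity) (by fun_prop)
          (.of_forall fun ω => norm_sub_smul_sq_le hγ hμ e (ghat ω) (gbar ω))
    _ = _ := by
        rw [integral_add (by fun_prop) (by fun_prop), integral_add (by fun_prop) (by fun_prop),
          integral_sub (by fun_prop) (by fun_prop), integral_const, integral_const_mul,
          integral_const_mul, integral_const_mul, integral_inner hgbar_int]
        simp

end InnerProductSpace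

theorem one_step_descent_with_bias_general
    {d : ℕ} (f : EuclideanSpace ℝ (Fin d) → ℝ) (μc : ℝ) (hμ : 0 < μc)
    (hstrong : ∀ x y : EuclideanSpace ℝ (Fin d),
      f x + ⟪gradient f x, y - x⟫_ℝ + μc / 2 * ‖y - x‖ ^ 2 ≤ f y)
    (xstar : EuclideanSpace ℝ (Fin d))
    (x : EuclideanSpace ℝ (Fin d)) (γ : ℝ) (hγ : 0 < γ)
    {Ω : Type*} {m0 : MeasurableSpace Ω} (P : Measure Ω) [IsProbabilityMeasure P]
    (ghat gbar : Ω → EuclideanSpace ℝ (Fin d))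
    (hghat : MemLp ghat 2 P) (hgbar : MemLp gbar 2 P)
    (hmean : ∫ ω, gbar ω ∂P = gradient f x) :
    ((∫ ω, ‖(x - γ • ghat ω) - xstar‖ ^ 2 ∂P)
      ≤ (1 + γ * μc / 2) * ‖x - xstar‖ ^ 2 - 2 * γ * ⟪x - xstar, gradient f x⟫_ℝ
        + 2 * γ ^ 2 * (∫ ω, ‖gbar ω‖ ^ 2 ∂P)
        + 2 * γ * (1 / μc + γ) * (∫ ω, ‖ghat ω - gbar ω‖ ^ 2 ∂P))
    ∧ ((∫ ω, ‖(x - γ • ghat ω) - xstar‖ ^ 2 ∂P)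
      ≤ (1 - γ * μc / 2) * ‖x - xstar‖ ^ 2 - 2 * γ * (f x - f xstar)
        + 2 * γ ^ 2 * (∫ ω, ‖gbar ω‖ ^ 2 ∂P)
        + 2 * γ * (1 / μc + γ) * (∫ ω, ‖ghat ω - gbar ω‖ ^ 2 ∂P)) := by
  have hstep : ∀ ω, x - γ • ghat ω - xstar = x - xstar - γ • ghat ω :=
    fun ω => sub_right_comm _ _ _
  have hdescent := integral_norm_sub_smul_sq_le hγ hμ (x - xstar) hghat hgbar
  simp only [← hstep, hmean] at hdescent
  have hsc : f x - f xstar + μc / 2 * ‖x - xstar‖ ^ 2 ≤ ⟪x - xstar, gradient f x⟫_ℝ := by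
    have := hstrong x xstar
    rw [norm_sub_rev, ← neg_sub, inner_neg_right, real_inner_comm] at this
    linarith
  refine ⟨hdescent, hdescent.trans ?_⟩
  linear_combination 2 * γ * hsc

/-- One step of a gradient-type method with a biased estimator: descent inequalities for
`x⁺ = x - γ ĝ` when `E[ḡ] = ∇f(x)`. -/
theorem one_step_descent_with_bias
    {d : ℕ} (f : EuclideanSpace ℝ (Fin d) → ℝ) (μc : ℝ) (hμ : 0 < μc)
    (hdiff : Differentiable ℝ f)
    (hstrong : ∀ x y : EuclideanSpace ℝ (Fin d),
      f x + ⟪gradient f x, y - x⟫_ℝ + μc / 2 * ‖y - x‖ ^ 2 ≤ f y)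
    (xstar : EuclideanSpace ℝ (Fin d)) (hmin : ∀ y, f xstar ≤ f y)
    (x : EuclideanSpace ℝ (Fin d)) (γ : ℝ) (hγ : 0 < γ)
    {Ω : Type*} {m0 : MeasurableSpace Ω} (P : Measure Ω) [IsProbabilityMeasure P]
    (ghat gbar : Ω → EuclideanSpace ℝ (Fin d))
    (hghat : MemLp ghat 2 P) (hgbar : MemLp gbar 2 P)
    (hmean : ∫ ω, gbar ω ∂P = gradient f x) :
    ((∫ ω, ‖(x - γ • ghat ω) - xstar‖ ^ 2 ∂P)
      ≤ (1 + γ * μc / 2) * ‖x - xstar‖ ^ 2 - 2 * γ * ⟪x - xstar, gradient f x⟫_ℝ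
        + 2 * γ ^ 2 * (∫ ω, ‖gbar ω‖ ^ 2 ∂P)
        + 2 * γ * (1 / μc + γ) * (∫ ω, ‖ghat ω - gbar ω‖ ^ 2 ∂P))
    ∧ ((∫ ω, ‖(x - γ • ghat ω) - xstar‖ ^ 2 ∂P)
      ≤ (1 - γ * μc / 2) * ‖x - xstar‖ ^ 2 - 2 * γ * (f x - f xstar)
        + 2 * γ ^ 2 * (∫ ω, ‖gbar ω‖ ^ 2 ∂P)
        + 2 * γ * (1 / μc + γ) * (∫ ω, ‖ghat ω - gbar ω‖ ^ 2 ∂P)) :=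
  one_step_descent_with_bias_general f μc hμ hstrong xstar x γ hγ (m0 := m0) P ghat gbar hghat hgbar
    hmean
end

section
/- Under Assumption 1, for any x ∈ ℝ^d, any batch size b ≥ 1, and any points {w_i}_{i∈𝒢} indexed by a finite nonempty set 𝒢 of size G, the averaged SVRG estimator satisfies (1/m^{bG}) Σ_{(J_i)_{i∈𝒢} ∈ ({1,…,m}^b)^𝒢} ‖(1/G) Σ_{i∈𝒢} g(x, w_i, J_i)‖² ≤ 4L·(f(x) − f(x*)) + 2σ_*², where σ_*² = (1/(Gm)) Σ_{i∈𝒢} Σ_{j=1}^m ‖∇f_j(w_i) − ∇f_j(x*)‖². -/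
/-!
Write `a_j = ∇f_j(x) - ∇f_j(x*)` and `u_{i,j} = ∇f(w_i) - (∇f_j(w_i) - ∇f_j(x*))`, so that the
averaged estimator is the mean, over the `Gb` independent uniform indices `j_k` with `k = (i, t)`,
of `a_{j_k} + u_{i,j_k}`. Since `∑_j ∇f_j(x*) = 0`, each `u_{i,·}` has mean zero, hence the noise part
has no cross terms and its second moment is `(Gb)⁻²` times the sum of the variances, each at most
the second moment `(1/m) ∑_j ‖∇f_j(w_i) - ∇f_j(x*)‖²`. The signal part is bounded by Jensen and
by co-coercivity of convex `L`-smooth functions, `‖∇g u - ∇g v‖² ≤ 2L (g u - g v - ⟪∇g v, u - v⟫)`,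
summed over `j` at `v = x*`.
-/

open Finset
open scoped BigOperators InnerProductSpace

/-- The SVRG gradient estimator `g(x, w, J) = (1/b) ∑_t (∇f_{J t}(x) - ∇f_{J t}(w)) + ∇f(w)`,
where `Favg` plays the role of the full objective `f = (1/m) ∑_j f_j`. -/
noncomputable def gEst {d m b : ℕ} (f : Fin m → EuclideanSpace ℝ (Fin d) → ℝ)
    (Favg : EuclideanSpace ℝ (Fin d) → ℝ)
    (x w : EuclideanSpace ℝ (Fin d)) (J : Fin b → Fin m) : EuclideanSpace ℝ (Fin d) :=
  (b : ℝ)⁻¹ • ∑ t : Fin b, (gradient (f (J t)) x - gradient (f (J t)) w)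
    + gradient Favg w

open scoped RealInnerProductSpace

section SmoothConvex

variable {V : Type*} [NormedAddCommGroup V] [InnerProductSpace ℝ V] [CompleteSpace V]
  {g : V → ℝ}

lemma hasDerivAt_comp_lineMap (hg : Differentiable ℝ g) (v u : V) (t : ℝ) :
    HasDerivAt (fun s => g (AffineMap.lineMap v u s))
      ⟪gradient g (AffineMap.lineMap v u t), u - v⟫ t := by
  have hfd := (hg (AffineMap.lineMap v u t)).hasGradientAt
  rw [hasGradientAt_iff_hasFDerivAt] at hfd
  exact hfd.comp_hasDerivAt t AffineMap.hasDerivAt_lineMap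

lemma ConvexOn.add_inner_gradient_le (hc : ConvexOn ℝ Set.univ g) (hg : Differentiable ℝ g)
    (v u : V) : g v + ⟪gradient g v, u - v⟫ ≤ g u := by
  have hline : ConvexOn ℝ Set.univ (fun s : ℝ => g (AffineMap.lineMap v u s)) := by
    have := hc.comp_affineMap (AffineMap.lineMap v u : ℝ →ᵃ[ℝ] V)
    rwa [Set.preimage_univ] at this
  have := hline.le_slope_of_hasDerivAt (Set.mem_univ 0) (Set.mem_univ 1) zero_lt_one
    (by simpa only [AffineMap.lineMap_apply_zero] using hasDerivAt_comp_lineMap hg v u 0)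
  simp only [slope_def_field, AffineMap.lineMap_apply_zero, AffineMap.lineMap_apply_one] at this
  linarith

variable {L : ℝ}

lemma le_add_inner_gradient_add_sq (hg : Differentiable ℝ g)
    (hlip : ∀ p q, ‖gradient g p - gradient g q‖ ≤ L * ‖p - q‖) (v u : V) :
    g u ≤ g v + ⟪gradient g v, u - v⟫ + L / 2 * ‖u - v‖ ^ 2 := by
  set φ : ℝ → ℝ := fun t => g (AffineMap.lineMap v u t) - g v - t * ⟪gradient g v, u - v⟫
  have hφ : ∀ t, HasDerivAt φ ⟪gradient g (AffineMap.lineMap v u t) - gradient g v, u - v⟫ t := by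
    intro t
    refine (((hasDerivAt_comp_lineMap hg v u t).sub_const (g v)).sub
      ((hasDerivAt_id t).mul_const ⟪gradient g v, u - v⟫)).congr_deriv ?_
    rw [inner_sub_left, one_mul]
  set B : ℝ → ℝ := fun t => L / 2 * t ^ 2 * ‖u - v‖ ^ 2
  have hB : ∀ t, HasDerivAt B (L * t * ‖u - v‖ ^ 2) t := by
    intro t
    refine (((hasDerivAt_pow 2 t).const_mul (L / 2)).mul_const (‖u - v‖ ^ 2)).congr_deriv ?_
    rw [show (2 - 1 : ℕ) = 1 from rfl, pow_one]
    push_cast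
    ring
  have hφ_le_hB : ∀ t ∈ Set.Ico (0 : ℝ) 1,
      ⟪gradient g (AffineMap.lineMap v u t) - gradient g v, u - v⟫ ≤ L * t * ‖u - v‖ ^ 2 := by
    rintro t ⟨ht, -⟩
    calc _ ≤ ‖gradient g (AffineMap.lineMap v u t) - gradient g v‖ * ‖u - v‖ :=
          real_inner_le_norm _ _
      _ ≤ L * ‖AffineMap.lineMap v u t - v‖ * ‖u - v‖ := by gcongr; exact hlip _ _
      _ = L * t * ‖u - v‖ ^ 2 := by
          rw [AffineMap.lineMap_apply, vsub_eq_sub, vadd_eq_add, add_sub_cancel_right, norm_smul,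
            Real.norm_of_nonneg ht]
          ring
  have h1 := image_le_of_deriv_right_le_deriv_boundary
    (fun t _ => (hφ t).continuousAt.continuousWithinAt) (fun t _ => (hφ t).hasDerivWithinAt)
    (B := B) (by simp [φ, B]) (fun t _ => (hB t).continuousAt.continuousWithinAt)
    (fun t _ => (hB t).hasDerivWithinAt) hφ_le_hB (Set.right_mem_Icc.2 zero_le_one)
  simp only [φ, B, AffineMap.lineMap_apply_one] at h1
  linarith

lemma ConvexOn.sq_norm_gradient_sub_le (hc : ConvexOn ℝ Set.univ g) (hL : 0 < L)
    (hg : Differentiable ℝ g)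
    (hlip : ∀ p q, ‖gradient g p - gradient g q‖ ≤ L * ‖p - q‖) (u v : V) :
    ‖gradient g u - gradient g v‖ ^ 2 ≤ 2 * L * (g u - g v - ⟪gradient g v, u - v⟫) := by
  set q := gradient g u - gradient g v
  -- compare the convexity lower bound at `v` with the smoothness upper bound at `u`, both
  -- evaluated at the gradient step `u - q / L`
  have hlow := hc.add_inner_gradient_le hg v (u - L⁻¹ • q)
  have hup := le_add_inner_gradient_add_sq hg hlip u (u - L⁻¹ • q)
  rw [show u - L⁻¹ • q - v = (u - v) - L⁻¹ • q by abel, inner_sub_right,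
    real_inner_smul_right] at hlow
  rw [show u - L⁻¹ • q - u = -(L⁻¹ • q) by abel, inner_neg_right, real_inner_smul_right,
    norm_neg, norm_smul, Real.norm_of_nonneg (inv_nonneg.2 hL.le)] at hup
  have hq : L⁻¹ * ⟪gradient g u, q⟫ - L⁻¹ * ⟪gradient g v, q⟫ = L⁻¹ * ‖q‖ ^ 2 := by
    rw [← mul_sub, ← inner_sub_left, real_inner_self_eq_norm_sq]
  have hsq : L / 2 * (L⁻¹ * ‖q‖) ^ 2 = L⁻¹ * ‖q‖ ^ 2 / 2 := by field_simp
  have hgap : L⁻¹ * ‖q‖ ^ 2 / 2 ≤ g u - g v - ⟪gradient g v, u - v⟫ := by linarith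
  calc ‖q‖ ^ 2 = 2 * L * (L⁻¹ * ‖q‖ ^ 2 / 2) := by field_simp
    _ ≤ 2 * L * (g u - g v - ⟪gradient g v, u - v⟫) := by gcongr

end SmoothConvex

section UniformFunctions

variable {E : Type*} [NormedAddCommGroup E] [InnerProductSpace ℝ E]

lemma norm_inv_card_smul_sum_sq_le {ι : Type*} (s : Finset ι) (y : ι → E) :
    ‖(#s : ℝ)⁻¹ • ∑ i ∈ s, y i‖ ^ 2 ≤ (#s : ℝ)⁻¹ * ∑ i ∈ s, ‖y i‖ ^ 2 := by
  rcases s.eq_empty_or_nonempty with rfl | hs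
  · simp
  have hcs : ‖∑ i ∈ s, y i‖ ^ 2 ≤ #s * ∑ i ∈ s, ‖y i‖ ^ 2 :=
    (pow_le_pow_left₀ (norm_nonneg _) (norm_sum_le _ _) 2).trans sq_sum_le_card_mul_sum_sq
  have hpos : (0 : ℝ) < #s := by exact_mod_cast hs.card_pos
  rw [norm_smul, mul_pow, Real.norm_of_nonneg (by positivity)]
  calc (#s : ℝ)⁻¹ ^ 2 * ‖∑ i ∈ s, y i‖ ^ 2 ≤ (#s : ℝ)⁻¹ ^ 2 * (#s * ∑ i ∈ s, ‖y i‖ ^ 2) := by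
        gcongr
    _ = (#s : ℝ)⁻¹ * ∑ i ∈ s, ‖y i‖ ^ 2 := by field_simp

lemma sum_norm_sub_sq_le_sum_norm_sq {ι : Type*} (s : Finset ι) (c : ι → E) (μ : E)
    (hμ : ∑ i ∈ s, (μ - c i) = 0) : ∑ i ∈ s, ‖μ - c i‖ ^ 2 ≤ ∑ i ∈ s, ‖c i‖ ^ 2 := by
  have hc : ∀ i, ‖c i‖ ^ 2 = ‖μ‖ ^ 2 - 2 * ⟪μ, μ - c i⟫ + ‖μ - c i‖ ^ 2 := fun i => by
    rw [← norm_sub_sq_real, sub_sub_cancel]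
  simp_rw [hc, sum_add_distrib, sum_sub_distrib, ← mul_sum, ← inner_sum, hμ, inner_zero_right]
  have : 0 ≤ ∑ i ∈ s, ‖μ‖ ^ 2 := sum_nonneg fun _ _ => sq_nonneg _
  linarith

variable {κ α : Type*} [Fintype κ] [DecidableEq κ] [Fintype α]

lemma expect_pi_eq_expect_funSplitAt {M : Type*} [AddCommMonoid M] [Module ℚ≥0 M] (k : κ)
    (Φ : (κ → α) → M) :
    𝔼 h, Φ h = 𝔼 a, 𝔼 r : {j // j ≠ k} → α, Φ ((Equiv.funSplitAt k α).symm (a, r)) := by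
  rw [Fintype.expect_equiv (Equiv.funSplitAt k α) _ (fun p => Φ ((Equiv.funSplitAt k α).symm p))
    fun h => by rw [Equiv.symm_apply_apply], ← univ_product_univ, expect_product]

lemma expect_pi_comp_eval [Nonempty α] {M : Type*} [AddCommMonoid M] [Module ℚ≥0 M]
    (F : α → M) (k : κ) : 𝔼 h : κ → α, F (h k) = 𝔼 a, F a := by
  simp [expect_pi_eq_expect_funSplitAt k, Equiv.funSplitAt_symm_apply]

lemma expect_pi_inner_eq_zero {k k' : κ} (hk : k' ≠ k) {u : α → E} (hu : ∑ a, u a = 0)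
    (v : α → E) : 𝔼 h : κ → α, ⟪u (h k), v (h k')⟫ = 0 := by
  rw [expect_pi_eq_expect_funSplitAt k, expect_comm]
  refine expect_eq_zero fun r _ => ?_
  simp [Equiv.funSplitAt_symm_apply, hk, Fintype.expect_eq_sum_div_card, ← sum_inner, hu]

lemma expect_pi_norm_sum_sq [Nonempty α] (v : κ → α → E) (hv : ∀ k, ∑ a, v k a = 0) :
    𝔼 h : κ → α, ‖∑ k, v k (h k)‖ ^ 2 = ∑ k, 𝔼 a, ‖v k a‖ ^ 2 := by
  have hexpand : ∀ h : κ → α, ‖∑ k, v k (h k)‖ ^ 2 = ∑ k, ∑ k', ⟪v k (h k), v k' (h k')⟫ := by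
    intro h
    simp_rw [← real_inner_self_eq_norm_sq, sum_inner, inner_sum]
  simp_rw [hexpand, expect_sum_comm]
  refine sum_congr rfl fun k _ => ?_
  rw [sum_eq_single k (fun k' _ hk' => expect_pi_inner_eq_zero hk' (hv k) _) (by simp)]
  simp_rw [real_inner_self_eq_norm_sq]
  exact expect_pi_comp_eval (fun a => ‖v k a‖ ^ 2) k

lemma expect_pi_norm_average_sq_le [Nonempty α] (a : α → E) :
    𝔼 h : κ → α, ‖(Fintype.card κ : ℝ)⁻¹ • ∑ k, a (h k)‖ ^ 2 ≤ 𝔼 j, ‖a j‖ ^ 2 := by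
  rcases isEmpty_or_nonempty κ with hκ | hκ
  · simpa using expect_nonneg fun j _ => sq_nonneg ‖a j‖
  calc 𝔼 h : κ → α, ‖(Fintype.card κ : ℝ)⁻¹ • ∑ k, a (h k)‖ ^ 2
      ≤ 𝔼 h : κ → α, (Fintype.card κ : ℝ)⁻¹ * ∑ k, ‖a (h k)‖ ^ 2 :=
        expect_le_expect fun h _ => norm_inv_card_smul_sum_sq_le univ _
    _ = 𝔼 j, ‖a j‖ ^ 2 := by
        rw [← mul_expect, expect_sum_comm]
        simp_rw [expect_pi_comp_eval (fun j => ‖a j‖ ^ 2)]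
        simp

lemma expect_pi_norm_average_add_sq_le [Nonempty α] (a : α → E) (u : κ → α → E)
    (hu : ∀ k, ∑ j, u k j = 0) :
    𝔼 h : κ → α, ‖(Fintype.card κ : ℝ)⁻¹ • ∑ k, (a (h k) + u k (h k))‖ ^ 2
      ≤ 2 * 𝔼 j, ‖a j‖ ^ 2 + 2 * ((Fintype.card κ : ℝ) ^ 2)⁻¹ * ∑ k, 𝔼 j, ‖u k j‖ ^ 2 := by
  set c : ℝ := (Fintype.card κ : ℝ)⁻¹
  have hsplit : ∀ x y : E, ‖x + y‖ ^ 2 ≤ 2 * ‖x‖ ^ 2 + 2 * ‖y‖ ^ 2 := fun x y => by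
    nlinarith [norm_add_le x y, norm_nonneg (x + y), add_sq_le (a := ‖x‖) (b := ‖y‖)]
  have hnoise : 𝔼 h : κ → α, ‖c • ∑ k, u k (h k)‖ ^ 2 = c ^ 2 * ∑ k, 𝔼 j, ‖u k j‖ ^ 2 := by
    simp_rw [norm_smul, mul_pow, Real.norm_of_nonneg (by positivity : 0 ≤ c), ← mul_expect,
      expect_pi_norm_sum_sq u hu]
  calc 𝔼 h : κ → α, ‖c • ∑ k, (a (h k) + u k (h k))‖ ^ 2
      ≤ 𝔼 h : κ → α, (2 * ‖c • ∑ k, a (h k)‖ ^ 2 + 2 * ‖c • ∑ k, u k (h k)‖ ^ 2) :=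
        expect_le_expect fun h _ => by rw [sum_add_distrib, smul_add]; exact hsplit _ _
    _ ≤ 2 * 𝔼 j, ‖a j‖ ^ 2 + 2 * (c ^ 2 * ∑ k, 𝔼 j, ‖u k j‖ ^ 2) := by
        rw [expect_add_distrib, ← mul_expect, ← mul_expect, hnoise]
        gcongr
        exact expect_pi_norm_average_sq_le a
    _ = _ := by simp only [c, inv_pow]; ring

end UniformFunctions

section FiniteSum

variable {V : Type*} [NormedAddCommGroup V] [InnerProductSpace ℝ V] [CompleteSpace V]

lemma IsLocalMin.gradient_eq_zero {F : V → ℝ} {x : V} (h : IsLocalMin F x) :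
    gradient F x = 0 := by
  simp [gradient, h.fderiv_eq_zero]

variable {α : Type*} [Fintype α] {f : α → V → ℝ} {F : V → ℝ}

lemma gradient_eq_of_eq_average (hF : ∀ x, F x = (Fintype.card α : ℝ)⁻¹ * ∑ j, f j x)
    (hdiff : ∀ j, Differentiable ℝ (f j)) (z : V) :
    gradient F z = (Fintype.card α : ℝ)⁻¹ • ∑ j, gradient (f j) z := by
  refine HasGradientAt.gradient ?_
  rw [funext hF, hasGradientAt_iff_hasFDerivAt, map_smul, map_sum]
  refine (HasFDerivAt.fun_sum fun j _ => ?_).const_mul _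
  exact hasGradientAt_iff_hasFDerivAt.1 (hdiff j z).hasGradientAt

variable [Nonempty α]

lemma sum_gradient_eq_card_smul (hF : ∀ x, F x = (Fintype.card α : ℝ)⁻¹ * ∑ j, f j x)
    (hdiff : ∀ j, Differentiable ℝ (f j)) (z : V) :
    ∑ j, gradient (f j) z = (Fintype.card α : ℝ) • gradient F z := by
  rw [gradient_eq_of_eq_average hF hdiff, smul_smul, mul_inv_cancel₀ (by positivity), one_smul]

lemma sum_gradient_eq_zero_of_forall_le (hF : ∀ x, F x = (Fintype.card α : ℝ)⁻¹ * ∑ j, f j x)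
    (hdiff : ∀ j, Differentiable ℝ (f j)) {xstar : V} (hmin : ∀ y, F xstar ≤ F y) :
    ∑ j, gradient (f j) xstar = 0 := by
  rw [sum_gradient_eq_card_smul hF hdiff,
    IsLocalMin.gradient_eq_zero (Filter.Eventually.of_forall hmin), smul_zero]

lemma sum_gradient_sub_gradient_sub_eq_zero
    (hF : ∀ x, F x = (Fintype.card α : ℝ)⁻¹ * ∑ j, f j x)
    (hdiff : ∀ j, Differentiable ℝ (f j)) {xstar : V} (hmin : ∀ y, F xstar ≤ F y) (w : V) :
    ∑ j, (gradient F w - (gradient (f j) w - gradient (f j) xstar)) = 0 := by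
  rw [sum_sub_distrib, sum_sub_distrib, sum_gradient_eq_zero_of_forall_le hF hdiff hmin,
    sum_gradient_eq_card_smul hF hdiff, sum_const, card_univ, ← Nat.cast_smul_eq_nsmul ℝ]
  simp

lemma expect_sq_norm_gradient_sub_le {L : ℝ} (hL : 0 < L)
    (hF : ∀ x, F x = (Fintype.card α : ℝ)⁻¹ * ∑ j, f j x)
    (hdiff : ∀ j, Differentiable ℝ (f j)) (hconv : ∀ j, ConvexOn ℝ Set.univ (f j))
    (hsmooth : ∀ j p q, ‖gradient (f j) p - gradient (f j) q‖ ≤ L * ‖p - q‖)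
    {xstar : V} (hmin : ∀ y, F xstar ≤ F y) (x : V) :
    𝔼 j, ‖gradient (f j) x - gradient (f j) xstar‖ ^ 2 ≤ 2 * L * (F x - F xstar) := by
  calc 𝔼 j, ‖gradient (f j) x - gradient (f j) xstar‖ ^ 2
      ≤ 𝔼 j, 2 * L * (f j x - f j xstar - ⟪gradient (f j) xstar, x - xstar⟫) :=
        expect_le_expect fun j _ =>
          (hconv j).sq_norm_gradient_sub_le hL (hdiff j) (hsmooth j) x xstar
    _ = 2 * L * (F x - F xstar) := by
        rw [← mul_expect, Fintype.expect_eq_sum_div_card, sum_sub_distrib, sum_sub_distrib,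
          ← sum_inner, sum_gradient_eq_zero_of_forall_le hF hdiff hmin, inner_zero_left, hF x,
          hF xstar]
        ring

lemma expect_sq_norm_gradient_sub_gradient_sub_le
    (hF : ∀ x, F x = (Fintype.card α : ℝ)⁻¹ * ∑ j, f j x)
    (hdiff : ∀ j, Differentiable ℝ (f j)) {xstar : V} (hmin : ∀ y, F xstar ≤ F y) (w : V) :
    𝔼 j, ‖gradient F w - (gradient (f j) w - gradient (f j) xstar)‖ ^ 2
      ≤ 𝔼 j, ‖gradient (f j) w - gradient (f j) xstar‖ ^ 2 := by
  simp_rw [Fintype.expect_eq_sum_div_card]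
  exact div_le_div_of_nonneg_right (sum_norm_sub_sq_le_sum_norm_sq _ _ _
    (sum_gradient_sub_gradient_sub_eq_zero hF hdiff hmin w)) (Nat.cast_nonneg _)

end FiniteSum

section SVRG

variable {d m b : ℕ} (f : Fin m → EuclideanSpace ℝ (Fin d) → ℝ)
  (Favg : EuclideanSpace ℝ (Fin d) → ℝ) (x y : EuclideanSpace ℝ (Fin d))

lemma gEst_eq_inv_smul_sum (hb : b ≠ 0) (w : EuclideanSpace ℝ (Fin d)) (J : Fin b → Fin m) :
    gEst f Favg x w J = (b : ℝ)⁻¹ • ∑ t, ((gradient (f (J t)) x - gradient (f (J t)) y)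
      + (gradient Favg w - (gradient (f (J t)) w - gradient (f (J t)) y))) := by
  have hterm : ∀ t, (gradient (f (J t)) x - gradient (f (J t)) y)
      + (gradient Favg w - (gradient (f (J t)) w - gradient (f (J t)) y))
      = (gradient (f (J t)) x - gradient (f (J t)) w) + gradient Favg w := fun t => by abel
  simp_rw [hterm, sum_add_distrib, sum_const, card_univ, Fintype.card_fin,
    ← Nat.cast_smul_eq_nsmul ℝ, smul_add, smul_smul,
    inv_mul_cancel₀ (Nat.cast_ne_zero.2 hb : (b : ℝ) ≠ 0), one_smul, gEst]

lemma average_gEst_sq_eq_expect {ι : Type*} [DecidableEq ι] (𝒢 : Finset ι) (hb : b ≠ 0)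
    (w : ι → EuclideanSpace ℝ (Fin d)) :
    ((m : ℝ) ^ (b * #𝒢))⁻¹ * ∑ Jf : ↥𝒢 → Fin b → Fin m,
        ‖(#𝒢 : ℝ)⁻¹ • ∑ i ∈ 𝒢.attach, gEst f Favg x (w i.1) (Jf i)‖ ^ 2
      = 𝔼 h : ↥𝒢 × Fin b → Fin m, ‖(Fintype.card (↥𝒢 × Fin b) : ℝ)⁻¹ • ∑ k,
          ((gradient (f (h k)) x - gradient (f (h k)) y) + (gradient Favg (w k.1)
            - (gradient (f (h k)) (w k.1) - gradient (f (h k)) y)))‖ ^ 2 := by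
  have hcard : (Fintype.card (↥𝒢 → Fin b → Fin m) : ℝ) = (m : ℝ) ^ (b * #𝒢) := by
    simp [pow_mul]
  rw [inv_mul_eq_div, ← hcard, ← Fintype.expect_eq_sum_div_card]
  refine (Fintype.expect_equiv (Equiv.curry _ _ _) _ _ fun h => ?_).symm
  rw [← univ_eq_attach, Fintype.sum_prod_type, Fintype.card_prod, Fintype.card_coe,
    Fintype.card_fin, Nat.cast_mul, mul_inv, mul_smul, smul_sum]
  simp_rw [gEst_eq_inv_smul_sum f Favg x y hb]
  rfl

lemma sum_expect_sq_norm_svrg_noise_le {ι : Type*} (𝒢 : Finset ι) [Nonempty (Fin m)]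
    (hF : ∀ z, Favg z = (Fintype.card (Fin m) : ℝ)⁻¹ * ∑ j, f j z)
    (hdiff : ∀ j, Differentiable ℝ (f j)) (hmin : ∀ z, Favg y ≤ Favg z)
    (w : ι → EuclideanSpace ℝ (Fin d)) :
    ∑ k : ↥𝒢 × Fin b,
        𝔼 j, ‖gradient Favg (w k.1) - (gradient (f j) (w k.1) - gradient (f j) y)‖ ^ 2
      ≤ b * ((m : ℝ)⁻¹ * ∑ i ∈ 𝒢, ∑ j, ‖gradient (f j) (w i) - gradient (f j) y‖ ^ 2) := by
  have hsum : (m : ℝ)⁻¹ * ∑ i ∈ 𝒢, ∑ j, ‖gradient (f j) (w i) - gradient (f j) y‖ ^ 2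
      = ∑ i : ↥𝒢, 𝔼 j, ‖gradient (f j) (w i) - gradient (f j) y‖ ^ 2 := by
    simp [Fintype.expect_eq_sum_div_card, mul_sum, div_eq_inv_mul, ← sum_coe_sort 𝒢]
  simp only [hsum, Fintype.sum_prod_type, sum_const, card_univ, Fintype.card_fin, nsmul_eq_mul,
    mul_sum]
  exact sum_le_sum fun i _ => mul_le_mul_of_nonneg_left
    (expect_sq_norm_gradient_sub_gradient_sub_le hF hdiff hmin _) (Nat.cast_nonneg b)

end SVRG

theorem averaged_svrg_second_moment_bound_general
    {d m b G : ℕ} (hm : 1 ≤ m) (hb : 1 ≤ b)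
    {ι : Type*} [DecidableEq ι] (𝒢 : Finset ι) (hne : 𝒢.Nonempty) (hcard : 𝒢.card = G)
    -- Assumption 1
    (f : Fin m → EuclideanSpace ℝ (Fin d) → ℝ)
    (Favg : EuclideanSpace ℝ (Fin d) → ℝ)
    (hFavg : ∀ x, Favg x = (m : ℝ)⁻¹ * ∑ j : Fin m, f j x)
    (L : ℝ) (hL : 0 < L)
    (hdiff : ∀ j, Differentiable ℝ (f j))
    (hconv : ∀ j, ConvexOn ℝ Set.univ (f j))
    (hsmooth : ∀ j (x y : EuclideanSpace ℝ (Fin d)),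
      ‖gradient (f j) x - gradient (f j) y‖ ≤ L * ‖x - y‖)
    (xstar : EuclideanSpace ℝ (Fin d))
    (hmin : ∀ y, Favg xstar ≤ Favg y)
    -- current point and reference points
    (x : EuclideanSpace ℝ (Fin d)) (w : ι → EuclideanSpace ℝ (Fin d)) :
    ((m : ℝ) ^ (b * G))⁻¹ *
        ∑ Jf : ↥𝒢 → Fin b → Fin m,
          ‖(G : ℝ)⁻¹ • ∑ i ∈ 𝒢.attach, gEst f Favg x (w i.1) (Jf i)‖ ^ 2
      ≤ 4 * L * (Favg x - Favg xstar)
        + 2 * (((G : ℝ) * (m : ℝ))⁻¹ * ∑ i ∈ 𝒢, ∑ j : Fin m,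
            ‖gradient (f j) (w i) - gradient (f j) xstar‖ ^ 2) := by
  subst hcard
  have : Nonempty (Fin m) := ⟨⟨0, hm⟩⟩
  have hF : ∀ z, Favg z = (Fintype.card (Fin m) : ℝ)⁻¹ * ∑ j, f j z := by simpa using hFavg
  set S := ∑ i ∈ 𝒢, ∑ j : Fin m, ‖gradient (f j) (w i) - gradient (f j) xstar‖ ^ 2
  have hsignal := expect_sq_norm_gradient_sub_le hL hF hdiff hconv hsmooth hmin x
  have hnoise := sum_expect_sq_norm_svrg_noise_le (b := b) f Favg xstar 𝒢 hF hdiff hmin w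
  have hcoef : (((#𝒢 : ℝ) * b) ^ 2)⁻¹ * (b * ((m : ℝ)⁻¹ * S)) ≤ ((#𝒢 : ℝ) * m)⁻¹ * S := by
    have hG : (1 : ℝ) ≤ #𝒢 := by exact_mod_cast hne.card_pos
    have hb' : (1 : ℝ) ≤ b := by exact_mod_cast hb
    rw [show (((#𝒢 : ℝ) * b) ^ 2)⁻¹ * (b * ((m : ℝ)⁻¹ * S))
        = ((#𝒢 : ℝ) * m)⁻¹ * S / (#𝒢 * b) by field_simp]
    exact div_le_self (by positivity) (by nlinarith)
  rw [average_gEst_sq_eq_expect f Favg x xstar 𝒢 (by omega) w]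
  refine (expect_pi_norm_average_add_sq_le (fun j => gradient (f j) x - gradient (f j) xstar)
    (fun (k : ↥𝒢 × Fin b) j =>
      gradient Favg (w k.1) - (gradient (f j) (w k.1) - gradient (f j) xstar))
    fun k => sum_gradient_sub_gradient_sub_eq_zero hF hdiff hmin (w k.1)).trans ?_
  rw [Fintype.card_prod, Fintype.card_coe, Fintype.card_fin, Nat.cast_mul]
  calc _ ≤ 2 * (2 * L * (Favg x - Favg xstar))
        + 2 * (((#𝒢 : ℝ) * b) ^ 2)⁻¹ * (b * ((m : ℝ)⁻¹ * S)) := by gcongr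
    _ ≤ _ := by linarith

/-- Second-moment bound for the average of the workers' SVRG estimators. -/
theorem averaged_svrg_second_moment_bound
    {d m b G : ℕ} (hm : 1 ≤ m) (hb : 1 ≤ b)
    {ι : Type*} [DecidableEq ι] (𝒢 : Finset ι) (hne : 𝒢.Nonempty) (hcard : 𝒢.card = G)
    -- Assumption 1
    (f : Fin m → EuclideanSpace ℝ (Fin d) → ℝ)
    (Favg : EuclideanSpace ℝ (Fin d) → ℝ)
    (hFavg : ∀ x, Favg x = (m : ℝ)⁻¹ * ∑ j : Fin m, f j x)
    (L μc : ℝ) (hL : 0 < L) (hμ : 0 < μc)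
    (hdiff : ∀ j, Differentiable ℝ (f j))
    (hconv : ∀ j, ConvexOn ℝ Set.univ (f j))
    (hsmooth : ∀ j (x y : EuclideanSpace ℝ (Fin d)),
      ‖gradient (f j) x - gradient (f j) y‖ ≤ L * ‖x - y‖)
    (hstrong : ∀ x y : EuclideanSpace ℝ (Fin d),
      Favg x + ⟪gradient Favg x, y - x⟫_ℝ + μc / 2 * ‖y - x‖ ^ 2 ≤ Favg y)
    (xstar : EuclideanSpace ℝ (Fin d))
    (hmin : ∀ y, Favg xstar ≤ Favg y)
    -- current point and reference points
    (x : EuclideanSpace ℝ (Fin d)) (w : ι → EuclideanSpace ℝ (Fin d)) :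
    ((m : ℝ) ^ (b * G))⁻¹ *
        ∑ Jf : ↥𝒢 → Fin b → Fin m,
          ‖(G : ℝ)⁻¹ • ∑ i ∈ 𝒢.attach, gEst f Favg x (w i.1) (Jf i)‖ ^ 2
      ≤ 4 * L * (Favg x - Favg xstar)
        + 2 * (((G : ℝ) * (m : ℝ))⁻¹ * ∑ i ∈ 𝒢, ∑ j : Fin m,
            ‖gradient (f j) (w i) - gradient (f j) xstar‖ ^ 2) :=
  averaged_svrg_second_moment_bound_general hm hb 𝒢 hne hcard f Favg hFavg L hL hdiff hconv hsmooth
    xstar hmin x w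
end

section
/- Let f_1,…,f_m : ℝ^d → ℝ be differentiable, f = (1/m)Σ_{j=1}^m f_j, and suppose that for every y ∈ ℝ^d, (1/m)Σ_{j=1}^m ‖∇f_j(y) − ∇f(y)‖² ≤ σ². Then for any x, w, w' ∈ ℝ^d and any batch size b ≥ 1, (1/m^{2b}) Σ_{J ∈ {1,…,m}^b} Σ_{J' ∈ {1,…,m}^b} ‖g(x, w, J) − g(x, w', J')‖² ≤ 8σ²/b. -/
/-! Centred at `∇f(x)`, the estimator `g(x, w, J)` is the mean of the minibatch `J` of the
zero-mean vectors `X_w j = (∇f_j(x) - ∇f_j(w)) - (∇f(x) - ∇f(w))`. Averaging over the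
independent batches `J`, `J'` kills the cross term of `‖g(x, w, J) - g(x, w', J')‖²`, and
averaging over the independent entries of a batch kills the cross terms inside
`‖∑ₜ X_w (J t)‖²`, so the left side equals `(1/b) (avg ‖X_w‖² + avg ‖X_{w'}‖²)`. Finally
`‖X_w j‖² ≤ 2 ‖∇f_j(x) - ∇f(x)‖² + 2 ‖∇f_j(w) - ∇f(w)‖²`, whose average is at most `4σ²`. -/

open Finset
open scoped BigOperators

section TupleSums

variable {α E : Type*} [Fintype α] [NormedAddCommGroup E] [InnerProductSpace ℝ E]

lemma norm_sub_sq_le_two_mul_add (u v : E) : ‖u - v‖ ^ 2 ≤ 2 * ‖u‖ ^ 2 + 2 * ‖v‖ ^ 2 := by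
  have := parallelogram_law_with_norm ℝ u v
  nlinarith [sq_nonneg ‖u + v‖]

lemma sum_sum_norm_sub_sq_of_sum_eq_zero {κ κ' : Type*} [Fintype κ] [Fintype κ']
    (u : κ → E) {v : κ' → E} (hv : ∑ j, v j = 0) :
    ∑ i, ∑ j, ‖u i - v j‖ ^ 2
      = Fintype.card κ' * ∑ i, ‖u i‖ ^ 2 + Fintype.card κ * ∑ j, ‖v j‖ ^ 2 := by
  have cross : ∑ i, ∑ j, 2 * inner ℝ (u i) (v j) = 0 := by
    simp only [← mul_sum, ← inner_sum, hv, inner_zero_right, mul_zero, sum_const_zero]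
  simp only [norm_sub_sq_real, sum_add_distrib, sum_sub_distrib, cross, sub_zero,
    sum_const, card_univ, nsmul_eq_mul, mul_sum]

lemma Fintype.sum_fin_succ_pi {M : Type*} [AddCommMonoid M] {b : ℕ}
    (g : (Fin (b + 1) → α) → M) :
    ∑ J, g J = ∑ k, ∑ J : Fin b → α, g (Fin.cons k J) := by
  rw [← (Fin.consEquiv fun _ => α).sum_comp g, Fintype.sum_prod_type]
  rfl

lemma sum_pi_sum_eq_zero {M : Type*} [AddCommMonoid M] {X : α → M} (hX : ∑ a, X a = 0)
    (b : ℕ) : ∑ J : Fin b → α, ∑ t, X (J t) = 0 := by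
  induction b with
  | zero => simp
  | succ b ih =>
    simp only [Fintype.sum_fin_succ_pi, Fin.sum_univ_succ, Fin.cons_zero, Fin.cons_succ,
      sum_add_distrib, ih, sum_const_zero, add_zero]
    rw [sum_comm]
    simp [hX]

lemma card_mul_sum_pi_norm_sum_sq {X : α → E} (hX : ∑ a, X a = 0) (b : ℕ) :
    Fintype.card α * ∑ J : Fin b → α, ‖∑ t, X (J t)‖ ^ 2
      = b * Fintype.card α ^ b * ∑ a, ‖X a‖ ^ 2 := by
  induction b with
  | zero => simp
  | succ b ih =>
    have cross : ∑ k, ∑ J : Fin b → α, 2 * inner ℝ (X k) (∑ t, X (J t)) = 0 := by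
      simp only [← mul_sum, ← inner_sum, ← sum_inner, hX, inner_zero_left, mul_zero]
    simp only [Fintype.sum_fin_succ_pi, Fin.sum_univ_succ, Fin.cons_zero, Fin.cons_succ,
      norm_add_sq_real, sum_add_distrib, cross, add_zero]
    simp only [sum_const, card_univ, Fintype.card_pi, prod_const, Fintype.card_fin,
      nsmul_eq_mul]
    rw [← mul_sum]
    push_cast
    linear_combination (Fintype.card α : ℝ) * ih

noncomputable def batchMean {b : ℕ} (X : α → E) (J : Fin b → α) : E :=
  (b : ℝ)⁻¹ • ∑ t, X (J t)

lemma sum_batchMean_eq_zero {X : α → E} (hX : ∑ a, X a = 0) (b : ℕ) :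
    ∑ J : Fin b → α, batchMean X J = 0 := by
  simp only [batchMean, ← smul_sum, sum_pi_sum_eq_zero hX, smul_zero]

lemma card_mul_sum_norm_batchMean_sq {X : α → E} (hX : ∑ a, X a = 0) (b : ℕ) :
    Fintype.card α * ∑ J : Fin b → α, ‖batchMean X J‖ ^ 2
      = (b : ℝ)⁻¹ * Fintype.card α ^ b * ∑ a, ‖X a‖ ^ 2 := by
  rcases eq_or_ne b 0 with rfl | hb
  · simp [batchMean]
  simp only [batchMean, norm_smul, mul_pow, norm_inv, RCLike.norm_natCast, ← mul_sum]
  rw [mul_left_comm, card_mul_sum_pi_norm_sum_sq hX]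
  field_simp

lemma avg_sum_sum_norm_batchMean_sub_sq [Nonempty α] {X X' : α → E} (hX : ∑ a, X a = 0)
    (hX' : ∑ a, X' a = 0) (b : ℕ) :
    ((Fintype.card α : ℝ) ^ (2 * b))⁻¹ *
        ∑ J : Fin b → α, ∑ J' : Fin b → α, ‖batchMean X J - batchMean X' J'‖ ^ 2
      = (b : ℝ)⁻¹ * ((Fintype.card α : ℝ)⁻¹ * (∑ a, ‖X a‖ ^ 2 + ∑ a, ‖X' a‖ ^ 2)) := by
  have hα : (Fintype.card α : ℝ) ≠ 0 := Nat.cast_ne_zero.mpr Fintype.card_ne_zero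
  have h := card_mul_sum_norm_batchMean_sq hX b
  have h' := card_mul_sum_norm_batchMean_sq hX' b
  rw [sum_sum_norm_sub_sq_of_sum_eq_zero _ (sum_batchMean_eq_zero hX' b)]
  simp only [Fintype.card_pi, prod_const, card_univ, Fintype.card_fin, Nat.cast_pow]
  field_simp
  linear_combination (Fintype.card α : ℝ) ^ b * (h + h')

end TupleSums

lemma HasGradientAt.const_mul_sum {F ι : Type*} [NormedAddCommGroup F] [InnerProductSpace ℝ F]
    [CompleteSpace F] [Fintype ι] {f : ι → F → ℝ} {f' : ι → F} {y : F} (c : ℝ)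
    (hf : ∀ i, HasGradientAt (f i) (f' i) y) :
    HasGradientAt (fun x => c * ∑ i, f i x) (c • ∑ i, f' i) y := by
  have hsum := (HasFDerivAt.fun_sum (u := univ) fun i _ => (hf i).hasFDerivAt).const_smul c
  rw [← map_sum, ← map_smul] at hsum
  exact hasGradientAt_iff_hasFDerivAt.mpr hsum

section SVRG

variable {d m b : ℕ} (f : Fin m → EuclideanSpace ℝ (Fin d) → ℝ)
  (Favg : EuclideanSpace ℝ (Fin d) → ℝ)

noncomputable def svrgDeviation (x w : EuclideanSpace ℝ (Fin d)) :
    Fin m → EuclideanSpace ℝ (Fin d) :=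
  fun j => (gradient (f j) x - gradient (f j) w) - (gradient Favg x - gradient Favg w)

lemma gEst_eq_gradient_add_batchMean (hb : b ≠ 0) (x w : EuclideanSpace ℝ (Fin d))
    (J : Fin b → Fin m) :
    gEst f Favg x w J = gradient Favg x + batchMean (svrgDeviation f Favg x w) J := by
  have hb' : (b : ℝ) ≠ 0 := Nat.cast_ne_zero.mpr hb
  simp only [gEst, batchMean, svrgDeviation, sum_sub_distrib (f := fun t => _ - _), sum_const,
    card_univ, Fintype.card_fin, ← Nat.cast_smul_eq_nsmul ℝ, smul_sub, smul_smul,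
    inv_mul_cancel₀ hb', one_smul]
  abel

lemma sum_svrgDeviation_eq_zero
    (hgrad : ∀ y, ∑ j, gradient (f j) y = (m : ℝ) • gradient Favg y)
    (x w : EuclideanSpace ℝ (Fin d)) : ∑ j, svrgDeviation f Favg x w j = 0 := by
  simp only [svrgDeviation, sum_sub_distrib, hgrad, sum_const, card_univ, Fintype.card_fin,
    ← Nat.cast_smul_eq_nsmul ℝ]
  abel

lemma avg_norm_svrgDeviation_sq_le {σ : ℝ}
    (hvar : ∀ y, (m : ℝ)⁻¹ * ∑ j, ‖gradient (f j) y - gradient Favg y‖ ^ 2 ≤ σ ^ 2)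
    (x w : EuclideanSpace ℝ (Fin d)) :
    (m : ℝ)⁻¹ * ∑ j, ‖svrgDeviation f Favg x w j‖ ^ 2 ≤ 4 * σ ^ 2 := by
  have hsplit : ∀ j, ‖svrgDeviation f Favg x w j‖ ^ 2
      ≤ 2 * ‖gradient (f j) x - gradient Favg x‖ ^ 2
        + 2 * ‖gradient (f j) w - gradient Favg w‖ ^ 2 := fun j => by
    rw [svrgDeviation, sub_sub_sub_comm]
    exact norm_sub_sq_le_two_mul_add _ _
  calc (m : ℝ)⁻¹ * ∑ j, ‖svrgDeviation f Favg x w j‖ ^ 2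
      ≤ (m : ℝ)⁻¹ * ∑ j, (2 * ‖gradient (f j) x - gradient Favg x‖ ^ 2
          + 2 * ‖gradient (f j) w - gradient Favg w‖ ^ 2) := by
        gcongr with j; exact hsplit j
    _ = 2 * ((m : ℝ)⁻¹ * ∑ j, ‖gradient (f j) x - gradient Favg x‖ ^ 2)
          + 2 * ((m : ℝ)⁻¹ * ∑ j, ‖gradient (f j) w - gradient Favg w‖ ^ 2) := by
        rw [sum_add_distrib, ← mul_sum, ← mul_sum]; ring
    _ ≤ 4 * σ ^ 2 := by linarith [hvar x, hvar w]

end SVRG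

/-- Pairwise-deviation bound for SVRG estimators under the bounded-variance assumption. -/
theorem svrg_pairwise_deviation_bounded_variance
    {d m b : ℕ} (hm : 1 ≤ m) (hb : 1 ≤ b)
    (f : Fin m → EuclideanSpace ℝ (Fin d) → ℝ)
    (Favg : EuclideanSpace ℝ (Fin d) → ℝ)
    (hFavg : ∀ x, Favg x = (m : ℝ)⁻¹ * ∑ j : Fin m, f j x)
    (hdiff : ∀ j, Differentiable ℝ (f j))
    (σ : ℝ)
    (hvar : ∀ y : EuclideanSpace ℝ (Fin d),
      (m : ℝ)⁻¹ * ∑ j : Fin m, ‖gradient (f j) y - gradient Favg y‖ ^ 2 ≤ σ ^ 2)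
    (x w w' : EuclideanSpace ℝ (Fin d)) :
    ((m : ℝ) ^ (2 * b))⁻¹ *
        ∑ J : Fin b → Fin m, ∑ J' : Fin b → Fin m,
          ‖gEst f Favg x w J - gEst f Favg x w' J'‖ ^ 2
      ≤ 8 * σ ^ 2 / (b : ℝ) := by
  have : Nonempty (Fin m) := ⟨⟨0, hm⟩⟩
  have hgrad : ∀ y, ∑ j, gradient (f j) y = (m : ℝ) • gradient Favg y := fun y => by
    rw [funext hFavg, (HasGradientAt.const_mul_sum _ fun j => (hdiff j y).hasGradientAt).gradient,
      smul_inv_smul₀ (by positivity)]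
  simp only [gEst_eq_gradient_add_batchMean _ _ (Nat.one_le_iff_ne_zero.mp hb),
    add_sub_add_left_eq_sub]
  have hdev := avg_sum_sum_norm_batchMean_sub_sq (sum_svrgDeviation_eq_zero f Favg hgrad x w)
    (sum_svrgDeviation_eq_zero f Favg hgrad x w') b
  rw [Fintype.card_fin] at hdev
  rw [hdev, mul_add, div_eq_inv_mul]
  gcongr
  linarith [avg_norm_svrgDeviation_sq_le f Favg hvar x w,
    avg_norm_svrgDeviation_sq_le f Favg hvar x w']
end

section
/- Under Assumption 1, for any x, w ∈ ℝ^d and any batch size b ≥ 1, the SVRG estimator satisfies (1/m^b) Σ_{J ∈ {1,…,m}^b} ‖g(x, w, J) − ∇f(x)‖² ≤ (4L/b)·(f(x) − f(x*)) + (2/(bm)) Σ_{j=1}^m ‖∇f_j(w) − ∇f_j(x*)‖². -/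
open Finset
open scoped BigOperators InnerProductSpace

theorem norm_sub_sq_le {E : Type*} [SeminormedAddCommGroup E] (a b : E) :
    ‖a - b‖ ^ 2 ≤ 2 * ‖a‖ ^ 2 + 2 * ‖b‖ ^ 2 := by
  nlinarith [norm_sub_le a b, norm_nonneg (a - b), sq_nonneg (‖a‖ - ‖b‖)]

noncomputable def bregmanDiv {E : Type*} [NormedAddCommGroup E] [InnerProductSpace ℝ E]
    [CompleteSpace E] (f : E → ℝ) (x y : E) : ℝ :=
  f x - f y - ⟪gradient f y, x - y⟫_ℝ

section SmoothConvex

variable {E : Type*} [NormedAddCommGroup E] [InnerProductSpace ℝ E] [CompleteSpace E]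

theorem gradient_const_mul_sum {ι : Type*} (s : Finset ι) {f : ι → E → ℝ} {x : E}
    (hf : ∀ i ∈ s, DifferentiableAt ℝ (f i) x) (c : ℝ) :
    gradient (fun y => c * ∑ i ∈ s, f i y) x = c • ∑ i ∈ s, gradient (f i) x := by
  simp only [gradient, fderiv_const_mul (DifferentiableAt.fun_sum hf), fderiv_fun_sum hf,
    map_smul, map_sum]

theorem hasDerivAt_comp_add_smul {f : E → ℝ} (hf : Differentiable ℝ f) (x v : E) (t : ℝ) :
    HasDerivAt (fun s : ℝ => f (x + s • v)) ⟪gradient f (x + t • v), v⟫_ℝ t := by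
  have hline : HasDerivAt (fun s : ℝ => x + s • v) v t := by
    simpa using ((hasDerivAt_id t).smul_const v).const_add x
  exact (hf (x + t • v)).hasGradientAt.hasFDerivAt.comp_hasDerivAt t hline

theorem ConvexOn.bregmanDiv_nonneg {f : E → ℝ} (hf : Differentiable ℝ f)
    (hconv : ConvexOn ℝ Set.univ f) (x y : E) : 0 ≤ bregmanDiv f x y := by
  have hline : ConvexOn ℝ Set.univ fun s : ℝ => f (y + s • (x - y)) := by
    simpa [Function.comp_def, AffineMap.lineMap_apply_module', add_comm] using
      hconv.comp_affineMap (AffineMap.lineMap y x)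
  have hderiv := hasDerivAt_comp_add_smul hf y (x - y) 0
  rw [zero_smul, add_zero] at hderiv
  have := hline.le_slope_of_hasDerivAt (Set.mem_univ 0) (Set.mem_univ 1) one_pos hderiv
  simp only [slope_def_field, zero_smul, add_zero, one_smul, add_sub_cancel, sub_zero,
    div_one] at this
  rw [bregmanDiv]
  linarith

theorem bregmanDiv_le_of_lipschitz_gradient {f : E → ℝ} (hf : Differentiable ℝ f) {L : ℝ}
    (hs : ∀ x y, ‖gradient f x - gradient f y‖ ≤ L * ‖x - y‖) (x y : E) :
    bregmanDiv f x y ≤ L / 2 * ‖x - y‖ ^ 2 := by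
  set v := x - y
  have hB (s : ℝ) : HasDerivAt (fun s => f y + s * ⟪gradient f y, v⟫_ℝ + L / 2 * ‖v‖ ^ 2 * s ^ 2)
      (⟪gradient f y, v⟫_ℝ + L * ‖v‖ ^ 2 * s) s := by
    refine ((((hasDerivAt_id' s).mul_const _).const_add _).fun_add
      ((hasDerivAt_pow 2 s).const_mul (L / 2 * ‖v‖ ^ 2))).congr_deriv ?_
    norm_num
    ring
  have hbound := image_le_of_deriv_right_le_deriv_boundary (a := 0) (b := 1)
    (fun s _ => (hasDerivAt_comp_add_smul hf y v s).continuousAt.continuousWithinAt)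
    (fun s _ => (hasDerivAt_comp_add_smul hf y v s).hasDerivWithinAt)
    (by simp) (fun s _ => (hB s).continuousAt.continuousWithinAt)
    (fun s _ => (hB s).hasDerivWithinAt)
    (fun s hs01 => by
      have hlip : ‖gradient f (y + s • v) - gradient f y‖ ≤ L * (s * ‖v‖) := by
        simpa [norm_smul, abs_of_nonneg hs01.1] using hs (y + s • v) y
      have := real_inner_le_norm (gradient f (y + s • v) - gradient f y) v
      rw [inner_sub_left] at this
      nlinarith [norm_nonneg v])
    (Set.right_mem_Icc.2 zero_le_one)
  simp only [one_smul, one_mul, one_pow, mul_one, v, add_sub_cancel] at hbound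
  rw [bregmanDiv]
  linarith

theorem norm_gradient_sub_sq_le_bregmanDiv {f : E → ℝ} (hf : Differentiable ℝ f)
    (hconv : ConvexOn ℝ Set.univ f) {L : ℝ} (hL : 0 < L)
    (hs : ∀ x y, ‖gradient f x - gradient f y‖ ≤ L * ‖x - y‖) (x y : E) :
    ‖gradient f x - gradient f y‖ ^ 2 ≤ 2 * L * bregmanDiv f x y := by
  set g := gradient f x - gradient f y
  -- a gradient step from `x`: convexity bounds `f z` below (at `y`), smoothness above (at `x`)
  set z := x - L⁻¹ • g
  have hxz : x - z = L⁻¹ • g := sub_sub_cancel _ _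
  have hsplit : bregmanDiv f x y = bregmanDiv f z y - bregmanDiv f z x + ⟪g, x - z⟫_ℝ := by
    simp only [bregmanDiv, g, inner_sub_left, inner_sub_right]
    ring
  have hzy := hconv.bregmanDiv_nonneg hf z y
  have hzx := bregmanDiv_le_of_lipschitz_gradient hf hs z x
  rw [norm_sub_rev, hxz, norm_smul, mul_pow, Real.norm_of_nonneg (inv_nonneg.2 hL.le)] at hzx
  rw [hxz, real_inner_smul_right, real_inner_self_eq_norm_sq] at hsplit
  calc ‖g‖ ^ 2 = 2 * L * (L⁻¹ * ‖g‖ ^ 2 - L / 2 * (L⁻¹ ^ 2 * ‖g‖ ^ 2)) := by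
        field_simp
        ring
    _ ≤ 2 * L * bregmanDiv f x y := by
        gcongr
        linarith

theorem sum_norm_gradient_sub_sq_le {ι : Type*} [Fintype ι] {f : ι → E → ℝ}
    (hf : ∀ i, Differentiable ℝ (f i)) (hconv : ∀ i, ConvexOn ℝ Set.univ (f i)) {L : ℝ}
    (hL : 0 < L) (hs : ∀ i x y, ‖gradient (f i) x - gradient (f i) y‖ ≤ L * ‖x - y‖)
    {y : E} (hy : ∑ i, gradient (f i) y = 0) (x : E) :
    ∑ i, ‖gradient (f i) x - gradient (f i) y‖ ^ 2 ≤ 2 * L * (∑ i, f i x - ∑ i, f i y) := by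
  have hsum : ∑ i, bregmanDiv (f i) x y = ∑ i, f i x - ∑ i, f i y := by
    simp only [bregmanDiv, sum_sub_distrib, ← sum_inner, hy, inner_zero_left, sub_zero]
  rw [← hsum, mul_sum]
  exact sum_le_sum fun i _ => norm_gradient_sub_sq_le_bregmanDiv (hf i) (hconv i) hL (hs i) x y

end SmoothConvex

section CenteredSums

variable {E : Type*} [NormedAddCommGroup E] [InnerProductSpace ℝ E] {ι : Type*} [Fintype ι]

theorem sum_norm_add_sq_of_sum_eq_zero {Y : ι → E} (hY : ∑ i, Y i = 0) (z : E) :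
    ∑ i, ‖Y i + z‖ ^ 2 = ∑ i, ‖Y i‖ ^ 2 + Fintype.card ι * ‖z‖ ^ 2 := by
  simp only [norm_add_sq_real, sum_add_distrib, ← mul_sum, ← sum_inner, hY, inner_zero_left,
    mul_zero, add_zero, sum_const, card_univ, nsmul_eq_mul]

theorem sum_norm_sub_sq_le_of_sum_sub_eq_zero {a : ι → E} {c : E} (h : ∑ i, (a i - c) = 0) :
    ∑ i, ‖a i - c‖ ^ 2 ≤ ∑ i, ‖a i‖ ^ 2 := by
  have := sum_norm_add_sq_of_sum_eq_zero h c
  simp only [sub_add_cancel] at this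
  rw [this]
  exact le_add_of_nonneg_right (by positivity)

-- The factor `card ι` on the left avoids the truncated exponent `b - 1`.
theorem card_mul_sum_norm_sum_comp_sq {Y : ι → E} (hY : ∑ i, Y i = 0) (b : ℕ) :
    (Fintype.card ι : ℝ) * ∑ J : Fin b → ι, ‖∑ t, Y (J t)‖ ^ 2
      = b * (Fintype.card ι : ℝ) ^ b * ∑ i, ‖Y i‖ ^ 2 := by
  induction b with
  | zero => simp
  | succ b ih =>
    rw [← (Fin.consEquiv fun _ => ι).sum_comp, Fintype.sum_prod_type_right]
    simp only [Fin.consEquiv, Equiv.coe_fn_mk, Fin.sum_univ_succ, Fin.cons_zero, Fin.cons_succ,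
      sum_norm_add_sq_of_sum_eq_zero hY, sum_add_distrib, sum_const, card_univ, nsmul_eq_mul,
      ← mul_sum, mul_add, ih, Fintype.card_pi, prod_const, card_univ, Fintype.card_fin]
    push_cast
    ring

theorem mean_norm_smul_sum_comp_sq [Nonempty ι] {Y : ι → E} (hY : ∑ i, Y i = 0) {b : ℕ}
    (hb : b ≠ 0) :
    ((Fintype.card ι : ℝ) ^ b)⁻¹ * ∑ J : Fin b → ι, ‖(b : ℝ)⁻¹ • ∑ t, Y (J t)‖ ^ 2
      = ((b : ℝ) * Fintype.card ι)⁻¹ * ∑ i, ‖Y i‖ ^ 2 := by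
  have hm : (Fintype.card ι : ℝ) ≠ 0 := by positivity
  have key := card_mul_sum_norm_sum_comp_sq hY b
  simp only [norm_smul, mul_pow, norm_inv, RCLike.norm_natCast, ← mul_sum]
  field_simp
  linear_combination key

end CenteredSums

theorem gEst_sub_gradient {d m b : ℕ} (f : Fin m → EuclideanSpace ℝ (Fin d) → ℝ)
    (Favg : EuclideanSpace ℝ (Fin d) → ℝ) (x w : EuclideanSpace ℝ (Fin d)) (J : Fin b → Fin m)
    (hb : b ≠ 0) :
    gEst f Favg x w J - gradient Favg x = (b : ℝ)⁻¹ • ∑ t, ((gradient (f (J t)) x -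
      gradient (f (J t)) w) - (gradient Favg x - gradient Favg w)) := by
  simp only [gEst, sum_sub_distrib, sum_const, card_univ, Fintype.card_fin, smul_sub,
    ← Nat.cast_smul_eq_nsmul ℝ, smul_smul, inv_mul_cancel₀ (Nat.cast_ne_zero.2 hb : (b : ℝ) ≠ 0),
    one_smul]
  abel

theorem mean_norm_gEst_sub_gradient_sq_le {d m b : ℕ} (hm : m ≠ 0) (hb : b ≠ 0)
    (f : Fin m → EuclideanSpace ℝ (Fin d) → ℝ) (Favg : EuclideanSpace ℝ (Fin d) → ℝ)
    (hgrad : ∀ z, gradient Favg z = (m : ℝ)⁻¹ • ∑ j, gradient (f j) z)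
    (x w : EuclideanSpace ℝ (Fin d)) :
    ((m : ℝ) ^ b)⁻¹ * ∑ J : Fin b → Fin m, ‖gEst f Favg x w J - gradient Favg x‖ ^ 2
      ≤ ((b : ℝ) * m)⁻¹ * ∑ j, ‖gradient (f j) x - gradient (f j) w‖ ^ 2 := by
  have : Nonempty (Fin m) := ⟨⟨0, Nat.pos_of_ne_zero hm⟩⟩
  have hcentered : ∑ j, ((gradient (f j) x - gradient (f j) w)
      - (gradient Favg x - gradient Favg w)) = 0 := by
    rw [sum_sub_distrib, sum_const, card_univ, Fintype.card_fin, ← Nat.cast_smul_eq_nsmul ℝ,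
      hgrad, hgrad, ← smul_sub, ← sum_sub_distrib, smul_smul,
      mul_inv_cancel₀ (Nat.cast_ne_zero.2 hm), one_smul, sub_self]
  have hmean := mean_norm_smul_sum_comp_sq hcentered hb
  rw [Fintype.card_fin] at hmean
  simp_rw [gEst_sub_gradient f Favg x w _ hb, hmean]
  gcongr _ * ?_
  exact sum_norm_sub_sq_le_of_sum_sub_eq_zero hcentered

theorem svrg_variance_bound_general
    {d m b : ℕ} (hm : 1 ≤ m) (hb : 1 ≤ b)
    -- Assumption 1
    (f : Fin m → EuclideanSpace ℝ (Fin d) → ℝ)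
    (Favg : EuclideanSpace ℝ (Fin d) → ℝ)
    (hFavg : ∀ x, Favg x = (m : ℝ)⁻¹ * ∑ j : Fin m, f j x)
    (L : ℝ) (hL : 0 < L)
    (hdiff : ∀ j, Differentiable ℝ (f j))
    (hconv : ∀ j, ConvexOn ℝ Set.univ (f j))
    (hsmooth : ∀ j (x y : EuclideanSpace ℝ (Fin d)),
      ‖gradient (f j) x - gradient (f j) y‖ ≤ L * ‖x - y‖)
    (xstar : EuclideanSpace ℝ (Fin d))
    (hmin : ∀ y, Favg xstar ≤ Favg y)
    (x w : EuclideanSpace ℝ (Fin d)) :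
    ((m : ℝ) ^ b)⁻¹ *
        ∑ J : Fin b → Fin m, ‖gEst f Favg x w J - gradient Favg x‖ ^ 2
      ≤ 4 * L / (b : ℝ) * (Favg x - Favg xstar)
        + 2 / ((b : ℝ) * (m : ℝ)) * ∑ j : Fin m,
            ‖gradient (f j) w - gradient (f j) xstar‖ ^ 2 := by
  have hm0 : (m : ℝ) ≠ 0 := Nat.cast_ne_zero.2 (by omega)
  have hgrad (z) : gradient Favg z = (m : ℝ)⁻¹ • ∑ j, gradient (f j) z := by
    rw [show Favg = _ from funext hFavg]
    exact gradient_const_mul_sum _ (fun j _ => (hdiff j).differentiableAt) _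
  have hstar : ∑ j, gradient (f j) xstar = 0 := by
    have hloc : IsLocalMin Favg xstar := Filter.Eventually.of_forall hmin
    have h0 : gradient Favg xstar = 0 := by rw [gradient, hloc.fderiv_eq_zero, map_zero]
    simpa [hgrad, hm0] using h0
  calc ((m : ℝ) ^ b)⁻¹ * ∑ J : Fin b → Fin m, ‖gEst f Favg x w J - gradient Favg x‖ ^ 2
      ≤ ((b : ℝ) * m)⁻¹ * ∑ j, ‖gradient (f j) x - gradient (f j) w‖ ^ 2 :=
        mean_norm_gEst_sub_gradient_sq_le (by omega) (by omega) f Favg hgrad x w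
    _ ≤ ((b : ℝ) * m)⁻¹ * ∑ j, (2 * ‖gradient (f j) x - gradient (f j) xstar‖ ^ 2
          + 2 * ‖gradient (f j) w - gradient (f j) xstar‖ ^ 2) := by
        gcongr with j
        rw [← sub_sub_sub_cancel_right _ _ (gradient (f j) xstar)]
        exact norm_sub_sq_le _ _
    _ ≤ ((b : ℝ) * m)⁻¹ * (2 * (2 * L * (∑ j, f j x - ∑ j, f j xstar))
          + 2 * ∑ j, ‖gradient (f j) w - gradient (f j) xstar‖ ^ 2) := by
        rw [sum_add_distrib, ← mul_sum, ← mul_sum]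
        gcongr
        exact sum_norm_gradient_sub_sq_le hdiff hconv hL hsmooth hstar x
    _ = 4 * L / (b : ℝ) * (Favg x - Favg xstar)
        + 2 / ((b : ℝ) * (m : ℝ)) * ∑ j : Fin m,
            ‖gradient (f j) w - gradient (f j) xstar‖ ^ 2 := by
        rw [hFavg, hFavg]
        field_simp
        ring

/-- Variance bound for the SVRG estimator under Assumption 1. -/
theorem svrg_variance_bound
    {d m b : ℕ} (hm : 1 ≤ m) (hb : 1 ≤ b)
    -- Assumption 1
    (f : Fin m → EuclideanSpace ℝ (Fin d) → ℝ)
    (Favg : EuclideanSpace ℝ (Fin d) → ℝ)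
    (hFavg : ∀ x, Favg x = (m : ℝ)⁻¹ * ∑ j : Fin m, f j x)
    (L μc : ℝ) (hL : 0 < L) (hμ : 0 < μc)
    (hdiff : ∀ j, Differentiable ℝ (f j))
    (hconv : ∀ j, ConvexOn ℝ Set.univ (f j))
    (hsmooth : ∀ j (x y : EuclideanSpace ℝ (Fin d)),
      ‖gradient (f j) x - gradient (f j) y‖ ≤ L * ‖x - y‖)
    (hstrong : ∀ x y : EuclideanSpace ℝ (Fin d),
      Favg x + ⟪gradient Favg x, y - x⟫_ℝ + μc / 2 * ‖y - x‖ ^ 2 ≤ Favg y)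
    (xstar : EuclideanSpace ℝ (Fin d))
    (hmin : ∀ y, Favg xstar ≤ Favg y)
    (x w : EuclideanSpace ℝ (Fin d)) :
    ((m : ℝ) ^ b)⁻¹ *
        ∑ J : Fin b → Fin m, ‖gEst f Favg x w J - gradient Favg x‖ ^ 2
      ≤ 4 * L / (b : ℝ) * (Favg x - Favg xstar)
        + 2 / ((b : ℝ) * (m : ℝ)) * ∑ j : Fin m,
            ‖gradient (f j) w - gradient (f j) xstar‖ ^ 2 :=
  svrg_variance_bound_general hm hb f Favg hFavg L hL hdiff hconv hsmooth xstar hmin x w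
end

section
/- Under Assumption 1, let x ∈ ℝ^d and let {w_i}_{i∈𝒢} be points indexed by a finite nonempty set 𝒢 of size G. Suppose each w_i⁺ is a random point equal to x with probability p ∈ (0,1] and equal to w_i otherwise, independently across i ∈ 𝒢. Then E[σ₊²] = (1−p)·σ² + (p/m) Σ_{j=1}^m ‖∇f_j(x) − ∇f_j(x*)‖² ≤ (1−p)·σ² + 2Lp·(f(x) − f(x*)), where σ² = (1/(Gm)) Σ_{i∈𝒢} Σ_{j=1}^m ‖∇f_j(w_i) − ∇f_j(x*)‖² and σ₊² = (1/(Gm)) Σ_{i∈𝒢} Σ_{j=1}^m ‖∇f_j(w_i⁺) − ∇f_j(x*)‖². -/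
open MeasureTheory ProbabilityTheory Finset
open scoped BigOperators InnerProductSpace ENNReal

/-!
By linearity of expectation, each reference point contributes `p` times its value at `x` plus
`1 - p` times its old value, which gives the identity.
For the bound, each convex `L`-smooth `f_j` satisfies the cocoercivity inequality
`‖∇f_j x - ∇f_j x*‖² ≤ 2L (f_j x - f_j x* - ⟪∇f_j x*, x - x*⟫)`, obtained from the descent lemma
applied to `f_j - ⟪∇f_j x*, ·⟫`, which is minimal at `x*`. Averaging over `j`, the linear terms
cancel because `∇f(x*) = 0`.
-/

section SmoothConvex

variable {E : Type*} [NormedAddCommGroup E] [InnerProductSpace ℝ E] [CompleteSpace E]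

theorem HasGradientAt.hasDerivAt_comp_add_smul {g : E → ℝ} {g' a v : E} {t : ℝ}
    (hg : HasGradientAt g g' (a + t • v)) :
    HasDerivAt (fun s : ℝ => g (a + s • v)) ⟪g', v⟫_ℝ t := by
  have hline : HasDerivAt (fun s : ℝ => a + s • v) v t := by
    simpa using ((hasDerivAt_id t).smul_const v).const_add a
  exact (hasGradientAt_iff_hasFDerivAt.mp hg).comp_hasDerivAt t hline

theorem ConvexOn.add_inner_sub_le_of_hasGradientAt {g : E → ℝ} {g' a : E}
    (hc : ConvexOn ℝ Set.univ g) (hg : HasGradientAt g g' a) (b : E) :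
    g a + ⟪g', b - a⟫_ℝ ≤ g b := by
  have hline : ConvexOn ℝ Set.univ (fun t : ℝ => g (a + t • (b - a))) := by
    have hcomp : (fun t : ℝ => g (a + t • (b - a))) = g ∘ AffineMap.lineMap a b := by
      ext t
      simp [AffineMap.lineMap_apply, add_comm]
    simpa [hcomp] using hc.comp_affineMap (AffineMap.lineMap a b)
  have hslope := hline.le_slope_of_hasDerivAt (Set.mem_univ 0) (Set.mem_univ 1) one_pos
    (HasGradientAt.hasDerivAt_comp_add_smul (by simpa using hg))
  simp only [slope_def_field, zero_smul, add_zero, one_smul, add_sub_cancel, sub_zero,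
    div_one] at hslope
  linarith

theorem le_add_inner_add_of_lipschitz_gradient {g : E → ℝ} {g' : E → E} {L : ℝ}
    (hg : ∀ z, HasGradientAt g (g' z) z) (hlip : ∀ a b, ‖g' a - g' b‖ ≤ L * ‖a - b‖) (a b : E) :
    g b ≤ g a + ⟪g' a, b - a⟫_ℝ + L / 2 * ‖b - a‖ ^ 2 := by
  set v := b - a
  -- `g` minus its quadratic upper model along the segment; it decreases for `t ≥ 0`
  set φ : ℝ → ℝ := fun t => g (a + t • v) - t * ⟪g' a, v⟫_ℝ - L / 2 * t ^ 2 * ‖v‖ ^ 2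
  have hφ : ∀ t, HasDerivAt φ (⟪g' (a + t • v) - g' a, v⟫_ℝ - L * t * ‖v‖ ^ 2) t := by
    intro t
    refine (((hg (a + t • v)).hasDerivAt_comp_add_smul.sub
      ((hasDerivAt_id t).mul_const ⟪g' a, v⟫_ℝ)).sub
      (((hasDerivAt_pow 2 t).const_mul (L / 2)).mul_const (‖v‖ ^ 2))).congr_deriv ?_
    rw [inner_sub_left]
    push_cast
    ring
  have hφ_nonpos : ∀ t ∈ interior (Set.Ici (0 : ℝ)),
      ⟪g' (a + t • v) - g' a, v⟫_ℝ - L * t * ‖v‖ ^ 2 ≤ 0 := by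
    intro t ht
    rw [interior_Ici] at ht
    rw [sub_nonpos]
    calc ⟪g' (a + t • v) - g' a, v⟫_ℝ
        ≤ ‖g' (a + t • v) - g' a‖ * ‖v‖ := real_inner_le_norm _ _
      _ ≤ L * ‖t • v‖ * ‖v‖ := by
          gcongr
          simpa using hlip (a + t • v) a
      _ = L * t * ‖v‖ ^ 2 := by rw [norm_smul, Real.norm_of_nonneg ht.le]; ring
  have hanti : AntitoneOn φ (Set.Ici 0) :=
    antitoneOn_of_hasDerivWithinAt_nonpos (convex_Ici 0)
      (fun t _ => (hφ t).continuousAt.continuousWithinAt) (fun t _ => (hφ t).hasDerivWithinAt)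
      hφ_nonpos
  have hφ01 := hanti Set.self_mem_Ici (Set.mem_Ici.mpr zero_le_one) zero_le_one
  simp only [φ, v, zero_smul, one_smul, add_zero, add_sub_cancel] at hφ01
  linarith

theorem norm_sq_le_two_mul_sub_of_lipschitz_gradient {g : E → ℝ} {g' : E → E} {L : ℝ} {c : E}
    (hL : 0 < L) (hg : ∀ z, HasGradientAt g (g' z) z)
    (hlip : ∀ a b, ‖g' a - g' b‖ ≤ L * ‖a - b‖) (hmin : ∀ y, g c ≤ g y) (a : E) :
    ‖g' a‖ ^ 2 ≤ 2 * L * (g a - g c) := by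
  -- a gradient step of length `1 / L` from `a` decreases `g` by at least `‖g' a‖² / (2L)`
  have hdesc := le_add_inner_add_of_lipschitz_gradient hg hlip a (a - L⁻¹ • g' a)
  rw [sub_sub_cancel_left, inner_neg_right, real_inner_smul_right, real_inner_self_eq_norm_sq,
    norm_neg, norm_smul, Real.norm_of_nonneg (inv_nonneg.mpr hL.le)] at hdesc
  have h := mul_le_mul_of_nonneg_left ((hmin _).trans hdesc) (by positivity : 0 ≤ 2 * L)
  field_simp at h
  linarith

theorem ConvexOn.norm_sub_sq_le_of_lipschitz_gradient {g : E → ℝ} {g' : E → E} {L : ℝ}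
    (hc : ConvexOn ℝ Set.univ g) (hL : 0 < L) (hg : ∀ z, HasGradientAt g (g' z) z)
    (hlip : ∀ a b, ‖g' a - g' b‖ ≤ L * ‖a - b‖) (a c : E) :
    ‖g' a - g' c‖ ^ 2 ≤ 2 * L * (g a - g c - ⟪g' c, a - c⟫_ℝ) := by
  set h : E → ℝ := fun z => g z - ⟪g' c, z⟫_ℝ
  have hh : ∀ z, HasGradientAt h (g' z - g' c) z := by
    intro z
    rw [hasGradientAt_iff_hasFDerivAt, map_sub]
    exact (hasGradientAt_iff_hasFDerivAt.mp (hg z)).sub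
      (InnerProductSpace.toDual ℝ E (g' c)).hasFDerivAt
  have hmin : ∀ y, h c ≤ h y := by
    intro y
    have := hc.add_inner_sub_le_of_hasGradientAt (hg c) y
    simp only [h, inner_sub_right] at this ⊢
    linarith
  have := norm_sq_le_two_mul_sub_of_lipschitz_gradient hL hh
    (fun a b => by simpa using hlip a b) hmin a
  convert this using 2
  simp only [h, inner_sub_right]
  ring

theorem mul_sum_norm_sub_gradient_sq_le {κ : Type*} [Fintype κ] {f : κ → E → ℝ} {F : E → ℝ}
    {c L : ℝ} (hc : 0 ≤ c) (hL : 0 < L) (hF : ∀ y, F y = c * ∑ j, f j y)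
    (hdiff : ∀ j, Differentiable ℝ (f j)) (hconv : ∀ j, ConvexOn ℝ Set.univ (f j))
    (hsmooth : ∀ j x y, ‖gradient (f j) x - gradient (f j) y‖ ≤ L * ‖x - y‖)
    {xstar : E} (hmin : ∀ y, F xstar ≤ F y) (x : E) :
    c * ∑ j, ‖gradient (f j) x - gradient (f j) xstar‖ ^ 2 ≤ 2 * L * (F x - F xstar) := by
  have hgrad : ∀ j z, HasGradientAt (f j) (gradient (f j) z) z :=
    fun j z => (hdiff j z).hasGradientAt
  have hF' : HasGradientAt F (c • ∑ j, gradient (f j) xstar) xstar := by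
    rw [hasGradientAt_iff_hasFDerivAt, map_smul, map_sum,
      show F = fun y => c * ∑ j, f j y from funext hF]
    exact (HasFDerivAt.fun_sum fun j _ =>
      hasGradientAt_iff_hasFDerivAt.mp (hgrad j xstar)).const_mul c
  have hzero : c • ∑ j, gradient (f j) xstar = 0 := by
    have hloc : IsLocalMin F xstar := Filter.Eventually.of_forall hmin
    exact (map_eq_zero_iff _ (InnerProductSpace.toDual ℝ E).injective).mp
      (hloc.hasFDerivAt_eq_zero (hasGradientAt_iff_hasFDerivAt.mp hF'))
  calc c * ∑ j, ‖gradient (f j) x - gradient (f j) xstar‖ ^ 2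
      ≤ c * ∑ j, 2 * L * (f j x - f j xstar - ⟪gradient (f j) xstar, x - xstar⟫_ℝ) := by
        gcongr with j
        exact (hconv j).norm_sub_sq_le_of_lipschitz_gradient hL (hgrad j) (hsmooth j) x xstar
    _ = 2 * L * (F x - F xstar - ⟪c • ∑ j, gradient (f j) xstar, x - xstar⟫_ℝ) := by
        rw [hF, hF, real_inner_smul_left, sum_inner, ← mul_sum, sum_sub_distrib, sum_sub_distrib]
        ring
    _ = 2 * L * (F x - F xstar) := by rw [hzero, inner_zero_left, sub_zero]

end SmoothConvex

section Bernoulli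

variable {Ω : Type*} {m0 : MeasurableSpace Ω} {P : Measure Ω}

theorem integrable_ite_of_measurable [IsFiniteMeasure P] {B : Ω → Bool} (hB : Measurable B)
    (a b : ℝ) : Integrable (fun ω => if B ω then a else b) P :=
  (Integrable.of_finite (f := fun x : Bool => if x then a else b)).comp_measurable hB

theorem integral_ite_of_measure_eq [IsProbabilityMeasure P] {B : Ω → Bool} (hB : Measurable B)
    {p : ℝ} (hp : 0 ≤ p) (hP : P {ω | B ω = true} = ENNReal.ofReal p) (a b : ℝ) :
    ∫ ω, (if B ω then a else b) ∂P = p * a + (1 - p) * b := by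
  have hS : MeasurableSet {ω | B ω = true} := hB (measurableSet_singleton true)
  have hrepr : (fun ω => if B ω then a else b)
      = fun ω => {ω | B ω = true}.indicator (fun _ => a - b) ω + b := by
    ext ω
    by_cases h : B ω <;> simp [h]
  rw [hrepr, integral_add ((integrable_const _).indicator hS) (integrable_const _),
    integral_indicator_const _ hS, integral_const, measureReal_def, hP, ENNReal.toReal_ofReal hp]
  simp only [probReal_univ, smul_eq_mul]
  ring

theorem integral_sum_ite_of_measure_eq [IsProbabilityMeasure P] {ι : Type*} (s : Finset ι)
    {B : ι → Ω → Bool} (hB : ∀ i ∈ s, Measurable (B i)) {p : ℝ} (hp : 0 ≤ p)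
    (hP : ∀ i ∈ s, P {ω | B i ω = true} = ENNReal.ofReal p) (a b : ι → ℝ) :
    ∫ ω, ∑ i ∈ s, (if B i ω then a i else b i) ∂P = ∑ i ∈ s, (p * a i + (1 - p) * b i) := by
  rw [integral_finsetSum _ fun i hi => integrable_ite_of_measurable (hB i hi) _ _]
  exact sum_congr rfl fun i hi => integral_ite_of_measure_eq (hB i hi) hp (hP i hi) _ _

end Bernoulli

theorem expected_sigma_after_reference_update_general
    {d m G : ℕ}
    {ι : Type*} (𝒢 : Finset ι) (hne : 𝒢.Nonempty) (hcard : 𝒢.card = G)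
    -- Assumption 1
    (f : Fin m → EuclideanSpace ℝ (Fin d) → ℝ)
    (Favg : EuclideanSpace ℝ (Fin d) → ℝ)
    (hFavg : ∀ x, Favg x = (m : ℝ)⁻¹ * ∑ j : Fin m, f j x)
    (L : ℝ) (hL : 0 < L)
    (hdiff : ∀ j, Differentiable ℝ (f j))
    (hconv : ∀ j, ConvexOn ℝ Set.univ (f j))
    (hsmooth : ∀ j (x y : EuclideanSpace ℝ (Fin d)),
      ‖gradient (f j) x - gradient (f j) y‖ ≤ L * ‖x - y‖)
    (xstar : EuclideanSpace ℝ (Fin d))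
    (hmin : ∀ y, Favg xstar ≤ Favg y)
    -- current point and reference points
    (x : EuclideanSpace ℝ (Fin d)) (w : ι → EuclideanSpace ℝ (Fin d))
    -- probabilistic update
    {Ω : Type*} {m0 : MeasurableSpace Ω} (P : Measure Ω) [IsProbabilityMeasure P]
    (p : ℝ) (hp0 : 0 < p)
    (Bv : ι → Ω → Bool)
    (hBmeas : ∀ i ∈ 𝒢, Measurable (Bv i))
    (hBern : ∀ i ∈ 𝒢, P {ω | Bv i ω = true} = ENNReal.ofReal p)
    (wplus : ι → Ω → EuclideanSpace ℝ (Fin d))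
    (hwplus : ∀ i ∈ 𝒢, ∀ ω, wplus i ω = if Bv i ω then x else w i) :
    ((∫ ω, ((G : ℝ) * (m : ℝ))⁻¹ * ∑ i ∈ 𝒢, ∑ j : Fin m,
          ‖gradient (f j) (wplus i ω) - gradient (f j) xstar‖ ^ 2 ∂P)
        = (1 - p) * (((G : ℝ) * (m : ℝ))⁻¹ * ∑ i ∈ 𝒢, ∑ j : Fin m,
              ‖gradient (f j) (w i) - gradient (f j) xstar‖ ^ 2)
          + p / (m : ℝ) * ∑ j : Fin m, ‖gradient (f j) x - gradient (f j) xstar‖ ^ 2)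
    ∧ ((∫ ω, ((G : ℝ) * (m : ℝ))⁻¹ * ∑ i ∈ 𝒢, ∑ j : Fin m,
          ‖gradient (f j) (wplus i ω) - gradient (f j) xstar‖ ^ 2 ∂P)
        ≤ (1 - p) * (((G : ℝ) * (m : ℝ))⁻¹ * ∑ i ∈ 𝒢, ∑ j : Fin m,
              ‖gradient (f j) (w i) - gradient (f j) xstar‖ ^ 2)
          + 2 * L * p * (Favg x - Favg xstar)) := by
  set S : EuclideanSpace ℝ (Fin d) → ℝ :=
    fun y => ∑ j : Fin m, ‖gradient (f j) y - gradient (f j) xstar‖ ^ 2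
  have hG : ((G : ℝ) * m)⁻¹ * G = (m : ℝ)⁻¹ := by
    rw [mul_inv, mul_right_comm, inv_mul_cancel₀ (by simp [← hcard, hne.ne_empty]), one_mul]
  have hexp : ∫ ω, ((G : ℝ) * m)⁻¹ * ∑ i ∈ 𝒢, S (wplus i ω) ∂P
      = (1 - p) * (((G : ℝ) * m)⁻¹ * ∑ i ∈ 𝒢, S (w i)) + p / m * S x := by
    have hupdate : ∀ ω, ∑ i ∈ 𝒢, S (wplus i ω) = ∑ i ∈ 𝒢, if Bv i ω then S x else S (w i) :=
      fun ω => sum_congr rfl fun i hi => by rw [hwplus i hi ω, apply_ite S]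
    simp_rw [hupdate]
    rw [integral_const_mul, integral_sum_ite_of_measure_eq 𝒢 hBmeas hp0.le hBern, sum_add_distrib,
      sum_const, hcard, ← mul_sum, nsmul_eq_mul]
    linear_combination (p * S x) * hG
  refine ⟨hexp, hexp ▸ add_le_add_right ?_ _⟩
  calc p / m * S x = p * ((m : ℝ)⁻¹ * S x) := by ring
    _ ≤ p * (2 * L * (Favg x - Favg xstar)) := mul_le_mul_of_nonneg_left
      (mul_sum_norm_sub_gradient_sq_le (by positivity) hL hFavg hdiff hconv hsmooth hmin x) hp0.le
    _ = 2 * L * p * (Favg x - Favg xstar) := by ring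

/-- Expected value of `σ₊²` after the probabilistic update of the reference points. -/
theorem expected_sigma_after_reference_update
    {d m G : ℕ} (hm : 1 ≤ m)
    {ι : Type*} [DecidableEq ι] (𝒢 : Finset ι) (hne : 𝒢.Nonempty) (hcard : 𝒢.card = G)
    -- Assumption 1
    (f : Fin m → EuclideanSpace ℝ (Fin d) → ℝ)
    (Favg : EuclideanSpace ℝ (Fin d) → ℝ)
    (hFavg : ∀ x, Favg x = (m : ℝ)⁻¹ * ∑ j : Fin m, f j x)
    (L μc : ℝ) (hL : 0 < L) (hμ : 0 < μc)
    (hdiff : ∀ j, Differentiable ℝ (f j))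
    (hconv : ∀ j, ConvexOn ℝ Set.univ (f j))
    (hsmooth : ∀ j (x y : EuclideanSpace ℝ (Fin d)),
      ‖gradient (f j) x - gradient (f j) y‖ ≤ L * ‖x - y‖)
    (hstrong : ∀ x y : EuclideanSpace ℝ (Fin d),
      Favg x + ⟪gradient Favg x, y - x⟫_ℝ + μc / 2 * ‖y - x‖ ^ 2 ≤ Favg y)
    (xstar : EuclideanSpace ℝ (Fin d))
    (hmin : ∀ y, Favg xstar ≤ Favg y)
    -- current point and reference points
    (x : EuclideanSpace ℝ (Fin d)) (w : ι → EuclideanSpace ℝ (Fin d))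
    -- probabilistic update
    {Ω : Type*} {m0 : MeasurableSpace Ω} (P : Measure Ω) [IsProbabilityMeasure P]
    (p : ℝ) (hp0 : 0 < p) (hp1 : p ≤ 1)
    (Bv : ι → Ω → Bool)
    (hBmeas : ∀ i ∈ 𝒢, Measurable (Bv i))
    (hBern : ∀ i ∈ 𝒢, P {ω | Bv i ω = true} = ENNReal.ofReal p)
    (hindep : iIndepFun
      (fun i : ↥𝒢 => Bv i.1) P)
    (wplus : ι → Ω → EuclideanSpace ℝ (Fin d))
    (hwplus : ∀ i ∈ 𝒢, ∀ ω, wplus i ω = if Bv i ω then x else w i) :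
    ((∫ ω, ((G : ℝ) * (m : ℝ))⁻¹ * ∑ i ∈ 𝒢, ∑ j : Fin m,
          ‖gradient (f j) (wplus i ω) - gradient (f j) xstar‖ ^ 2 ∂P)
        = (1 - p) * (((G : ℝ) * (m : ℝ))⁻¹ * ∑ i ∈ 𝒢, ∑ j : Fin m,
              ‖gradient (f j) (w i) - gradient (f j) xstar‖ ^ 2)
          + p / (m : ℝ) * ∑ j : Fin m, ‖gradient (f j) x - gradient (f j) xstar‖ ^ 2)
    ∧ ((∫ ω, ((G : ℝ) * (m : ℝ))⁻¹ * ∑ i ∈ 𝒢, ∑ j : Fin m,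
          ‖gradient (f j) (wplus i ω) - gradient (f j) xstar‖ ^ 2 ∂P)
        ≤ (1 - p) * (((G : ℝ) * (m : ℝ))⁻¹ * ∑ i ∈ 𝒢, ∑ j : Fin m,
              ‖gradient (f j) (w i) - gradient (f j) xstar‖ ^ 2)
          + 2 * L * p * (Favg x - Favg xstar)) :=
  expected_sigma_after_reference_update_general 𝒢 hne hcard f Favg hFavg L hL hdiff hconv hsmooth
    xstar hmin x w (m0 := m0) P p hp0 Bv hBmeas hBern wplus hwplus
end
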